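/- Let m ≥ 1 and let H : ℝ × ℝ^m → ℝ be a smooth function such that all second partial derivatives in the spatial variables are uniformly bounded: |∂²H/∂xⁱ∂xʲ(u, x)| ≤ c for all (u,x) ∈ ℝ × ℝ^m and all i, j ∈ {1,…,m}, for some constant c > 0. Then for all a, b ∈ ℝ, every maximal solution x : I → ℝ^m of the ODE ẍ(s) = a²·∇_x H(a·s + b, x(s)) is defined on all of ℝ. -/

import Mathlib

open Set

noncomputable section

/-- `x` (with velocity `v`) solves the second-order ODE `ẍ(s) = F (s, x(s))`
(valued in `ℝ^m`) on the set `s`. -/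
def SolOn {m : ℕ} (F : ℝ → EuclideanSpace ℝ (Fin m) → EuclideanSpace ℝ (Fin m))
    (x v : ℝ → EuclideanSpace ℝ (Fin m)) (s : Set ℝ) : Prop :=
  ∀ t ∈ s, HasDerivAt x (v t) t ∧ HasDerivAt v (F t (x t)) t

/-- `x` (with velocity `v`) is a maximal solution of `ẍ(s) = F (s, x(s))` on
the open interval `s`. -/
def IsMaximalSolution {m : ℕ}
    (F : ℝ → EuclideanSpace ℝ (Fin m) → EuclideanSpace ℝ (Fin m))
    (x v : ℝ → EuclideanSpace ℝ (Fin m)) (s : Set ℝ) : Prop :=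
  IsOpen s ∧ s.OrdConnected ∧ s.Nonempty ∧ SolOn F x v s ∧
  ∀ (s' : Set ℝ) (x' v' : ℝ → EuclideanSpace ℝ (Fin m)), IsOpen s' →
    s'.OrdConnected → s ⊆ s' → SolOn F x' v' s' →
    (∀ t ∈ s, x' t = x t ∧ v' t = v t) → s' = s


open scoped NNReal
open InnerProductSpace

set_option linter.unusedSectionVars false

section PPWAux

variable {E' : Type*} [NormedAddCommGroup E'] [NormedSpace ℝ E'] [CompleteSpace E']

/-- Gluing two solutions at a common endpoint. -/
theorem ppw_glue (V : ℝ → E' → E') {l r r' : ℝ} (hlr : l ≤ r) (hrr' : r ≤ r') {f g : ℝ → E'}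
    (hf : ∀ t ∈ Icc l r, HasDerivWithinAt f (V t (f t)) (Icc l r) t)
    (hg : ∀ t ∈ Icc r r', HasDerivWithinAt g (V t (g t)) (Icc r r') t)
    (hfg : f r = g r) :
    ∀ t ∈ Icc l r', HasDerivWithinAt (fun u => if u ≤ r then f u else g u)
      (V t ((fun u => if u ≤ r then f u else g u) t)) (Icc l r') t := by
  set F := fun u => if u ≤ r then f u else g u with hF
  have hFf : ∀ u, u ≤ r → F u = f u := fun u hu => if_pos hu
  have hFg : ∀ u ∈ Icc r r', F u = g u := by
    intro u hu
    rcases le_or_gt u r with h | h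
    · have : u = r := le_antisymm h hu.1
      simp [hF, this, hfg]
    · exact if_neg (not_le.mpr h)
  intro t ht
  rcases lt_trichotomy t r with h | h | h
  · have hmem : Icc l r ∈ nhdsWithin t (Icc l r') := by
      refine Filter.mem_of_superset (Filter.inter_mem self_mem_nhdsWithin
        (mem_nhdsWithin_of_mem_nhds (Iic_mem_nhds h))) ?_
      rintro u ⟨hu1, hu2⟩
      exact ⟨hu1.1, hu2⟩
    have h1 : HasDerivWithinAt f (V t (f t)) (Icc l r') t :=
      (hf t ⟨ht.1, h.le⟩).mono_of_mem_nhdsWithin hmem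
    have h2 : F =ᶠ[nhdsWithin t (Icc l r')] f := by
      filter_upwards [mem_nhdsWithin_of_mem_nhds (Iic_mem_nhds h)] with u hu
      exact hFf u hu
    rw [hFf t h.le]
    exact h1.congr_of_eventuallyEq h2 (hFf t h.le)
  · subst h
    rw [← Icc_union_Icc_eq_Icc hlr hrr', hFf t le_rfl]
    refine HasDerivWithinAt.union ?_ ?_
    · exact (hf t ⟨ht.1, le_rfl⟩).congr (fun u hu => hFf u hu.2) (hFf t le_rfl)
    · have h2 := (hg t ⟨le_rfl, hrr'⟩).congr hFg (hFg t ⟨le_rfl, hrr'⟩)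
      rw [hfg]
      exact h2
  · have hmem : Icc r r' ∈ nhdsWithin t (Icc l r') := by
      refine Filter.mem_of_superset (Filter.inter_mem self_mem_nhdsWithin
        (mem_nhdsWithin_of_mem_nhds (Ioi_mem_nhds h))) ?_
      rintro u ⟨hu1, hu2⟩
      exact ⟨le_of_lt hu2, hu1.2⟩
    have hFt : F t = g t := if_neg (not_le.mpr h)
    have h1 : HasDerivWithinAt g (V t (g t)) (Icc l r') t :=
      (hg t ⟨h.le, ht.2⟩).mono_of_mem_nhdsWithin hmem
    have h2 : F =ᶠ[nhdsWithin t (Icc l r')] g := by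
      filter_upwards [mem_nhdsWithin_of_mem_nhds (Ioi_mem_nhds h)] with u hu
      exact if_neg (not_le.mpr hu)
    rw [hFt]
    exact h1.congr_of_eventuallyEq h2 hFt

/-- Uniform-step local existence for a globally-Lipschitz, continuous vector field. -/
theorem ppw_local (V : ℝ → E' → E') (K : ℝ≥0)
    (hVcont : Continuous fun p : ℝ × E' => V p.1 p.2)
    (hVlip : ∀ t, LipschitzWith K (V t)) :
    ∃ ε : ℝ, 0 < ε ∧ ∀ (t₁ : ℝ) (y₁ : E'), ∃ f : ℝ → E', f t₁ = y₁ ∧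
      ∀ t ∈ Icc (t₁ - ε) (t₁ + ε),
        HasDerivWithinAt f (V t (f t)) (Icc (t₁ - ε) (t₁ + ε)) t := by
  set Kr : ℝ := (K : ℝ) with hKr
  have hK0 : 0 ≤ Kr := K.coe_nonneg
  set ε : ℝ := 1 / (2 * (Kr + 1)) with hε
  have hεpos : 0 < ε := by positivity
  refine ⟨ε, hεpos, fun t₁ y₁ => ?_⟩
  -- bound on ‖V t y₁‖ over the compact time interval
  obtain ⟨C₁, hC₁⟩ : ∃ C₁, ∀ t ∈ Icc (t₁ - ε) (t₁ + ε), ‖V t y₁‖ ≤ C₁ :=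
    isCompact_Icc.exists_bound_of_continuousOn
      ((hVcont.comp (continuous_id.prodMk continuous_const)).continuousOn)
  have hC₁0 : 0 ≤ C₁ :=
    le_trans (norm_nonneg _) (hC₁ t₁ ⟨by linarith, by linarith⟩)
  set R : ℝ := 2 * ε * (C₁ + 1) with hR
  set C : ℝ := C₁ + Kr * R with hC
  have hR0' : 0 ≤ R := by positivity
  have hC0' : 0 ≤ C := add_nonneg hC₁0 (mul_nonneg hK0 hR0')
  have hpl : IsPicardLindelof V (tmin := t₁ - ε) (tmax := t₁ + ε)
      ⟨t₁, by constructor <;> linarith⟩ y₁ ⟨R, hR0'⟩ 0 ⟨C, hC0'⟩ K := by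
    constructor
    · exact fun t _ => (hVlip t).lipschitzOnWith
    · exact fun y _ =>
        (hVcont.comp (continuous_id.prodMk continuous_const)).continuousOn
    · intro t ht y hy
      have hy : dist y y₁ ≤ R := Metric.mem_closedBall.mp hy
      show ‖V t y‖ ≤ C
      have h3 : dist (V t y) (V t y₁) ≤ Kr * R :=
        le_trans ((hVlip t).dist_le_mul y y₁)
          (mul_le_mul_of_nonneg_left hy hK0)
      calc ‖V t y‖ = ‖(V t y - V t y₁) + V t y₁‖ := by rw [sub_add_cancel]
        _ ≤ ‖V t y - V t y₁‖ + ‖V t y₁‖ := norm_add_le _ _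
        _ ≤ Kr * R + C₁ := add_le_add (by rw [← dist_eq_norm]; exact h3) (hC₁ t ht)
        _ = C := by rw [hC]; ring
    · have hmax : max (t₁ + ε - t₁) (t₁ - (t₁ - ε)) = ε := by
        rw [show t₁ + ε - t₁ = ε by ring, show t₁ - (t₁ - ε) = ε by ring, max_self]
      have h1 : ε * (2 * (Kr + 1)) = 1 := by
        rw [hε]; field_simp
      have hR0 : 0 ≤ R := by positivity
      have key : C * ε ≤ R := by
        nlinarith [mul_nonneg hC₁0 hεpos.le, mul_nonneg hK0 hR0]
      show C * max (t₁ + ε - t₁) (t₁ - (t₁ - ε)) ≤ R - ((0 : ℝ≥0) : ℝ)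
      rw [hmax, NNReal.coe_zero, sub_zero]
      exact key
  obtain ⟨f, hf1, hf2⟩ := hpl.exists_eq_forall_mem_Icc_hasDerivWithinAt₀
  exact ⟨f, hf1, hf2⟩


-- uniqueness helper: a solution on a closed interval containing t₀ agrees with a
-- solution on a larger closed interval, provided they agree at t₀.
theorem ppw_agree (V : ℝ → E' → E') (K : ℝ≥0) (hVlip : ∀ t, LipschitzWith K (V t))
    {l r l' r' t₀ : ℝ} (hsub : Icc l r ⊆ Icc l' r') (ht₀ : t₀ ∈ Icc l r)
    {f g : ℝ → E'}
    (hf : ∀ t ∈ Icc l r, HasDerivWithinAt f (V t (f t)) (Icc l r) t)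
    (hg : ∀ t ∈ Icc l' r', HasDerivWithinAt g (V t (g t)) (Icc l' r') t)
    (heq : f t₀ = g t₀) : EqOn f g (Icc l r) := by
  have hlip : ∀ t, LipschitzOnWith K (V t) ((fun _ : ℝ => (univ : Set E')) t) :=
    fun t => (hVlip t).lipschitzOnWith
  have hfc : ContinuousOn f (Icc l r) := fun u hu => (hf u hu).continuousWithinAt
  have hgc : ContinuousOn g (Icc l' r') := fun u hu => (hg u hu).continuousWithinAt
  have hl'r' := hsub ht₀
  intro t ht
  have hIcc1 : Icc t₀ t ⊆ Icc l r := fun u hu => ⟨le_trans ht₀.1 hu.1, le_trans hu.2 ht.2⟩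
  have hIcc2 : Icc t t₀ ⊆ Icc l r := fun u hu => ⟨le_trans ht.1 hu.1, le_trans hu.2 ht₀.2⟩
  rcases le_total t₀ t with h | h
  · -- forward uniqueness on [t₀, t]
    have key : EqOn f g (Icc t₀ t) := by
      apply ODE_solution_unique_of_mem_Icc_right (fun t _ => hlip t)
        (hfc.mono hIcc1) ?_ (fun _ _ => trivial)
        (hgc.mono fun u hu => hsub (hIcc1 hu)) ?_ (fun _ _ => trivial) heq
      · intro u hu
        have hur : u < r := lt_of_lt_of_le hu.2 ht.2
        refine (hf u (hIcc1 (Ico_subset_Icc_self hu))).mono_of_mem_nhdsWithin ?_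
        refine Filter.mem_of_superset (Filter.inter_mem self_mem_nhdsWithin
          (mem_nhdsWithin_of_mem_nhds (Iio_mem_nhds hur))) ?_
        rintro z ⟨hz1, hz2⟩
        exact ⟨le_trans ht₀.1 (le_trans hu.1 hz1), le_of_lt hz2⟩
      · intro u hu
        have hur : u < r' := lt_of_lt_of_le hu.2 (hsub ht).2
        refine (hg u (hsub (hIcc1 (Ico_subset_Icc_self hu)))).mono_of_mem_nhdsWithin ?_
        refine Filter.mem_of_superset (Filter.inter_mem self_mem_nhdsWithin
          (mem_nhdsWithin_of_mem_nhds (Iio_mem_nhds hur))) ?_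
        rintro z ⟨hz1, hz2⟩
        exact ⟨le_trans hl'r'.1 (le_trans hu.1 hz1), le_of_lt hz2⟩
    exact key ⟨h, le_rfl⟩
  · -- backward uniqueness on [t, t₀]
    have key : EqOn f g (Icc t t₀) := by
      apply ODE_solution_unique_of_mem_Icc_left (fun t _ => hlip t)
        (hfc.mono hIcc2) ?_ (fun _ _ => trivial)
        (hgc.mono fun u hu => hsub (hIcc2 hu)) ?_ (fun _ _ => trivial) heq
      · intro u hu
        have hul : l < u := lt_of_le_of_lt ht.1 hu.1
        refine (hf u (hIcc2 (Ioc_subset_Icc_self hu))).mono_of_mem_nhdsWithin ?_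
        refine Filter.mem_of_superset (Filter.inter_mem self_mem_nhdsWithin
          (mem_nhdsWithin_of_mem_nhds (Ioi_mem_nhds hul))) ?_
        rintro z ⟨hz1, hz2⟩
        exact ⟨le_of_lt hz2, le_trans hz1 (le_trans hu.2 ht₀.2)⟩
      · intro u hu
        have hul : l' < u := lt_of_le_of_lt (hsub ht).1 hu.1
        refine (hg u (hsub (hIcc2 (Ioc_subset_Icc_self hu)))).mono_of_mem_nhdsWithin ?_
        refine Filter.mem_of_superset (Filter.inter_mem self_mem_nhdsWithin
          (mem_nhdsWithin_of_mem_nhds (Ioi_mem_nhds hul))) ?_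
        rintro z ⟨hz1, hz2⟩
        exact ⟨le_of_lt hz2, le_trans hz1 (le_trans hu.2 hl'r'.2)⟩
    exact key ⟨le_rfl, h⟩


/-- Global existence: solutions on arbitrarily large symmetric intervals. -/
theorem ppw_exists_interval (V : ℝ → E' → E') {ε : ℝ} (hε : 0 < ε)
    (hloc : ∀ (t₁ : ℝ) (y₁ : E'), ∃ f : ℝ → E', f t₁ = y₁ ∧
      ∀ t ∈ Icc (t₁ - ε) (t₁ + ε),
        HasDerivWithinAt f (V t (f t)) (Icc (t₁ - ε) (t₁ + ε)) t)
    (t₀ : ℝ) (y₀ : E') :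
    ∀ n : ℕ, ∃ f : ℝ → E', f t₀ = y₀ ∧ ∀ t ∈ Icc (t₀ - n * ε) (t₀ + n * ε),
      HasDerivWithinAt f (V t (f t)) (Icc (t₀ - n * ε) (t₀ + n * ε)) t := by
  intro n
  induction n with
  | zero =>
    obtain ⟨f, hf0, hf⟩ := hloc t₀ y₀
    refine ⟨f, hf0, fun t ht => ?_⟩
    have hsub : Icc (t₀ - (0:ℕ) * ε) (t₀ + (0:ℕ) * ε) ⊆ Icc (t₀ - ε) (t₀ + ε) := by
      apply Icc_subset_Icc <;> push_cast <;> linarith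
    exact (hf t (hsub ht)).mono hsub
  | succ n ih =>
    obtain ⟨f, hf0, hf⟩ := ih
    set l : ℝ := t₀ - n * ε with hl
    set r : ℝ := t₀ + n * ε with hr
    have hnε : 0 ≤ (n : ℝ) * ε := by positivity
    have hlt₀ : l ≤ t₀ := by rw [hl]; linarith
    have ht₀r : t₀ ≤ r := by rw [hr]; linarith
    have hlr : l ≤ r := le_trans hlt₀ ht₀r
    -- right piece on [r, r + ε]
    obtain ⟨g, hg0, hg⟩ := hloc r (f r)
    have hg' : ∀ t ∈ Icc r (r + ε), HasDerivWithinAt g (V t (g t)) (Icc r (r + ε)) t := by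
      intro t ht
      have hsub : Icc r (r + ε) ⊆ Icc (r - ε) (r + ε) := Icc_subset_Icc (by linarith) le_rfl
      exact (hg t (hsub ht)).mono hsub
    have hF₁ := ppw_glue V hlr (by linarith : r ≤ r + ε) hf hg' hg0.symm
    set F₁ : ℝ → E' := fun u => if u ≤ r then f u else g u with hF₁def
    have hF₁t₀ : F₁ t₀ = y₀ := by
      show (if t₀ ≤ r then f t₀ else g t₀) = y₀
      rw [if_pos ht₀r]; exact hf0
    -- left piece on [l - ε, l]
    obtain ⟨h, hh0, hh⟩ := hloc l (F₁ l)
    have hh' : ∀ t ∈ Icc (l - ε) l, HasDerivWithinAt h (V t (h t)) (Icc (l - ε) l) t := by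
      intro t ht
      have hsub : Icc (l - ε) l ⊆ Icc (l - ε) (l + ε) := Icc_subset_Icc le_rfl (by linarith)
      exact (hh t (hsub ht)).mono hsub
    have hF₂ := ppw_glue V (by linarith : l - ε ≤ l) (le_trans hlr (by linarith)) hh' hF₁ hh0
    set F₂ : ℝ → E' := fun u => if u ≤ l then h u else F₁ u with hF₂def
    have hF₂t₀ : F₂ t₀ = y₀ := by
      show (if t₀ ≤ l then h t₀ else F₁ t₀) = y₀
      rcases eq_or_lt_of_le hlt₀ with hlt | hlt
      · rw [if_pos (le_of_eq hlt.symm), ← hlt, hh0]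
        show (if l ≤ r then f l else g l) = y₀
        rw [if_pos hlr, hlt]; exact hf0
      · rw [if_neg (not_le.mpr hlt)]
        exact hF₁t₀
    have e1 : t₀ - (n + 1 : ℕ) * ε = l - ε := by rw [hl]; push_cast; ring
    have e2 : t₀ + (n + 1 : ℕ) * ε = r + ε := by rw [hr]; push_cast; ring
    rw [e1, e2]
    exact ⟨F₂, hF₂t₀, hF₂⟩

/-- A full global solution, through any initial condition. -/
theorem ppw_exists_global (V : ℝ → E' → E') (K : ℝ≥0)
    (hVlip : ∀ t, LipschitzWith K (V t)) {ε : ℝ} (hε : 0 < ε)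
    (hloc : ∀ (t₁ : ℝ) (y₁ : E'), ∃ f : ℝ → E', f t₁ = y₁ ∧
      ∀ t ∈ Icc (t₁ - ε) (t₁ + ε),
        HasDerivWithinAt f (V t (f t)) (Icc (t₁ - ε) (t₁ + ε)) t)
    (t₀ : ℝ) (y₀ : E') :
    ∃ X : ℝ → E', X t₀ = y₀ ∧ ∀ t, HasDerivAt X (V t (X t)) t := by
  choose f hf0 hf using ppw_exists_interval V hε hloc t₀ y₀
  have hmono : ∀ {j k : ℕ}, j ≤ k →
      Icc (t₀ - j * ε) (t₀ + j * ε) ⊆ Icc (t₀ - k * ε) (t₀ + k * ε) := by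
    intro j k hjk
    have : (j : ℝ) * ε ≤ (k : ℝ) * ε :=
      mul_le_mul_of_nonneg_right (by exact_mod_cast hjk) hε.le
    exact Icc_subset_Icc (by linarith) (by linarith)
  have ht₀mem : ∀ n : ℕ, t₀ ∈ Icc (t₀ - n * ε) (t₀ + n * ε) := by
    intro n
    have : 0 ≤ (n : ℝ) * ε := by positivity
    exact ⟨by linarith, by linarith⟩
  have hagree : ∀ {j k : ℕ}, j ≤ k → EqOn (f j) (f k) (Icc (t₀ - j * ε) (t₀ + j * ε)) := by
    intro j k hjk
    exact ppw_agree V K hVlip (hmono hjk) (ht₀mem j) (hf j) (hf k)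
      ((hf0 j).trans (hf0 k).symm)
  set N : ℝ → ℕ := fun t => ⌈|t - t₀| / ε⌉₊ with hN
  have hNmem : ∀ t, t ∈ Icc (t₀ - N t * ε) (t₀ + N t * ε) := by
    intro t
    have h1 : |t - t₀| / ε ≤ (N t : ℝ) := Nat.le_ceil _
    have h2 : |t - t₀| ≤ (N t : ℝ) * ε := by
      rw [div_le_iff₀ hε] at h1; linarith
    have := abs_le.mp h2
    exact ⟨by linarith [this.1], by linarith [this.2]⟩
  set X : ℝ → E' := fun t => f (N t) t with hX
  have hXeq : ∀ M : ℕ, EqOn X (f M) (Icc (t₀ - M * ε) (t₀ + M * ε)) := by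
    intro M t ht
    rcases le_total (N t) M with hc | hc
    · exact hagree hc (hNmem t)
    · exact (hagree hc ht).symm
  refine ⟨X, ?_, ?_⟩
  · have := hXeq (N t₀) (hNmem t₀)
    rw [this]; exact hf0 _
  · intro t
    set M : ℕ := N t + 1 with hM
    have hlt : (N t : ℝ) * ε < (M : ℝ) * ε := by
      have : (N t : ℝ) < M := by exact_mod_cast Nat.lt_succ_self _
      exact mul_lt_mul_of_pos_right this hε
    have htIoo : t ∈ Ioo (t₀ - M * ε) (t₀ + M * ε) := by
      have := hNmem t
      exact ⟨by linarith [this.1], by linarith [this.2]⟩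
    have hd : HasDerivAt (f M) (V t (f M t)) t :=
      (hf M t (Ioo_subset_Icc_self htIoo)).hasDerivAt
        (Icc_mem_nhds htIoo.1 htIoo.2)
    have hev : X =ᶠ[nhds t] f M := by
      filter_upwards [Ioo_mem_nhds htIoo.1 htIoo.2] with u hu
      exact hXeq M (Ioo_subset_Icc_self hu)
    have := hd.congr_of_eventuallyEq hev
    rwa [← hXeq M (Ioo_subset_Icc_self htIoo)] at this


end PPWAux

section PPWGrad

variable {m : ℕ}

/-- Operator norm bound from bounds on basis vectors, for Euclidean domain. -/
theorem ppw_opNorm_le {F : Type*} [NormedAddCommGroup F] [NormedSpace ℝ F]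
    (T : EuclideanSpace ℝ (Fin m) →L[ℝ] F) {d : ℝ} (hd : 0 ≤ d)
    (h : ∀ j, ‖T (EuclideanSpace.single j 1)‖ ≤ d) : ‖T‖ ≤ m * d := by
  refine T.opNorm_le_bound (by positivity) (fun w => ?_)
  have hcoord : ∀ j, |w j| ≤ ‖w‖ := by
    intro j
    have h1 : ⟪EuclideanSpace.single j (1:ℝ), w⟫_ℝ = w j := by
      rw [EuclideanSpace.inner_single_left]; simp
    have h2 := abs_real_inner_le_norm (EuclideanSpace.single j (1:ℝ)) w
    rw [h1, EuclideanSpace.norm_single] at h2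
    simpa using h2
  have hw : w = ∑ j, w j • EuclideanSpace.single j (1:ℝ) := by
    ext i
    rw [WithLp.ofLp_sum, Fintype.sum_apply]
    simp [EuclideanSpace.single_apply, PiLp.smul_apply]
  calc ‖T w‖ = ‖∑ j, w j • T (EuclideanSpace.single j 1)‖ := by
        conv_lhs => rw [hw]
        rw [map_sum]
        simp_rw [map_smul]
  _ ≤ ∑ j, ‖w j • T (EuclideanSpace.single j 1)‖ := norm_sum_le _ _
  _ ≤ ∑ _j : Fin m, ‖w‖ * d := by
      refine Finset.sum_le_sum fun j _ => ?_
      rw [norm_smul, Real.norm_eq_abs]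
      exact mul_le_mul (hcoord j) (h j) (norm_nonneg _) (norm_nonneg _)
  _ = ↑m * d * ‖w‖ := by simp [Finset.sum_const]; ring

/-- The gradient of `H u` is Lipschitz, uniformly in `u`. -/
theorem ppw_grad_lipschitz (H : ℝ → EuclideanSpace ℝ (Fin m) → ℝ)
    (hsmooth : ContDiff ℝ (⊤ : ℕ∞) (fun p : ℝ × EuclideanSpace ℝ (Fin m) => H p.1 p.2))
    {c : ℝ} (hc : 0 ≤ c)
    (hbound : ∀ (u : ℝ) (x : EuclideanSpace ℝ (Fin m)) (i j : Fin m),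
      |fderiv ℝ (fun y => fderiv ℝ (H u) y (EuclideanSpace.single i 1)) x
        (EuclideanSpace.single j 1)| ≤ c)
    (u : ℝ) :
    LipschitzWith (⟨m * (m * c), by positivity⟩ : ℝ≥0) (gradient (H u)) := by
  have hHu : ContDiff ℝ (⊤ : ℕ∞) (H u) := by
    have := hsmooth.comp ((contDiff_const (c := u)).prodMk contDiff_id)
    exact this
  set D : EuclideanSpace ℝ (Fin m) → (EuclideanSpace ℝ (Fin m) →L[ℝ] ℝ) :=
    fderiv ℝ (H u) with hD
  have hDsmooth : ContDiff ℝ (⊤ : ℕ∞) D := hHu.fderiv_right (by simp)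
  have hDdiff : Differentiable ℝ D := hDsmooth.differentiable (by simp)
  -- entrywise bound on the second derivative
  have hentry : ∀ (x : EuclideanSpace ℝ (Fin m)) (i j : Fin m),
      |fderiv ℝ D x (EuclideanSpace.single j 1) (EuclideanSpace.single i 1)| ≤ c := by
    intro x i j
    have heq : fderiv ℝ (fun y => D y (EuclideanSpace.single i 1)) x =
        (fderiv ℝ D x).flip (EuclideanSpace.single i 1) := by
      rw [fderiv_clm_apply (hDdiff x) (differentiableAt_const _)]
      simp
    have := hbound u x i j
    rw [show (fun y => fderiv ℝ (H u) y (EuclideanSpace.single i 1)) =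
        (fun y => D y (EuclideanSpace.single i 1)) from rfl, heq] at this
    simpa using this
  -- second derivative operator norm bound
  have hnorm : ∀ x : EuclideanSpace ℝ (Fin m), ‖fderiv ℝ D x‖ ≤ m * (m * c) := by
    intro x
    refine ppw_opNorm_le _ (by positivity) (fun j => ?_)
    refine ppw_opNorm_le _ hc (fun i => ?_)
    rw [Real.norm_eq_abs]
    exact hentry x i j
  -- D is Lipschitz
  have hDlip : ∀ y z : EuclideanSpace ℝ (Fin m), ‖D y - D z‖ ≤ (m * (m * c)) * ‖y - z‖ := by
    intro y z
    exact (convex_univ).norm_image_sub_le_of_norm_fderiv_le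
      (fun x _ => hDdiff x) (fun x _ => hnorm x) trivial trivial
  refine LipschitzWith.of_dist_le_mul (fun y z => ?_)
  have hgrad : ∀ p, gradient (H u) p = (toDual ℝ (EuclideanSpace ℝ (Fin m))).symm (D p) :=
    fun p => rfl
  rw [hgrad, hgrad, dist_eq_norm, ← LinearIsometryEquiv.map_sub, LinearIsometryEquiv.norm_map]
  rw [dist_eq_norm]
  exact hDlip y z

/-- Joint continuity of the gradient. -/
theorem ppw_grad_cont (H : ℝ → EuclideanSpace ℝ (Fin m) → ℝ)
    (hsmooth : ContDiff ℝ (⊤ : ℕ∞) (fun p : ℝ × EuclideanSpace ℝ (Fin m) => H p.1 p.2)) :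
    Continuous (fun p : ℝ × EuclideanSpace ℝ (Fin m) => gradient (H p.1) p.2) := by
  have hdiff : Differentiable ℝ (fun p : ℝ × EuclideanSpace ℝ (Fin m) => H p.1 p.2) :=
    hsmooth.differentiable (by simp)
  have hkey : ∀ (u : ℝ) (p : EuclideanSpace ℝ (Fin m)),
      fderiv ℝ (H u) p = (fderiv ℝ (fun q : ℝ × EuclideanSpace ℝ (Fin m) => H q.1 q.2) (u, p)).comp
        (ContinuousLinearMap.inr ℝ ℝ (EuclideanSpace ℝ (Fin m))) := by
    intro u p
    have h1 : HasFDerivAt (H u)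
        ((fderiv ℝ (fun q : ℝ × EuclideanSpace ℝ (Fin m) => H q.1 q.2) (u, p)).comp
          (ContinuousLinearMap.inr ℝ ℝ (EuclideanSpace ℝ (Fin m)))) p :=
      ((hdiff (u, p)).hasFDerivAt).comp p (hasFDerivAt_prodMk_right u p)
    exact h1.fderiv
  have hcont : Continuous (fun p : ℝ × EuclideanSpace ℝ (Fin m) =>
      fderiv ℝ (fun q : ℝ × EuclideanSpace ℝ (Fin m) => H q.1 q.2) p) :=
    hsmooth.continuous_fderiv (by simp)
  have : Continuous (fun p : ℝ × EuclideanSpace ℝ (Fin m) => fderiv ℝ (H p.1) p.2) := by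
    simp_rw [hkey]
    exact hcont.clm_comp continuous_const
  exact ((toDual ℝ (EuclideanSpace ℝ (Fin m))).symm.continuous).comp this


end PPWGrad

/-- **Completeness of standard pp-waves (Leistner–Schliebner, Lemma 8, analytic
core).**  If `H : ℝ × ℝ^m → ℝ` is smooth with all second spatial partial
derivatives uniformly bounded, then for all `a, b ∈ ℝ` every maximal solution
of `ẍ(s) = a²·∇ₓH(a·s + b, x(s))` is defined on all of `ℝ`. -/
theorem pp_wave_transverse_complete (m : ℕ) (hm : 1 ≤ m)
    (H : ℝ → EuclideanSpace ℝ (Fin m) → ℝ)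
    (hsmooth : ContDiff ℝ (⊤ : ℕ∞) (fun p : ℝ × EuclideanSpace ℝ (Fin m) => H p.1 p.2))
    (c : ℝ) (hc : 0 < c)
    (hbound : ∀ (u : ℝ) (x : EuclideanSpace ℝ (Fin m)) (i j : Fin m),
      |fderiv ℝ (fun y => fderiv ℝ (H u) y (EuclideanSpace.single i 1)) x
        (EuclideanSpace.single j 1)| ≤ c) :
    ∀ a b : ℝ, ∀ (x v : ℝ → EuclideanSpace ℝ (Fin m)) (s : Set ℝ),
      IsMaximalSolution (fun t p => (a ^ 2) • gradient (H (a * t + b)) p) x v s →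
      s = univ := by
  intro a b x v s hmax
  obtain ⟨hopen, hord, ⟨t₀, ht₀⟩, hsol, hmaximal⟩ := hmax
  set Fab : ℝ → EuclideanSpace ℝ (Fin m) → EuclideanSpace ℝ (Fin m) :=
    fun t p => (a ^ 2) • gradient (H (a * t + b)) p with hFab
  set V : ℝ → (EuclideanSpace ℝ (Fin m) × EuclideanSpace ℝ (Fin m)) →
      (EuclideanSpace ℝ (Fin m) × EuclideanSpace ℝ (Fin m)) :=
    fun t y => (y.2, Fab t y.1) with hV
  set L : ℝ≥0 := (⟨m * (m * c), by positivity⟩ : ℝ≥0) with hL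
  have hGlip : ∀ u : ℝ, LipschitzWith L (gradient (H u)) :=
    ppw_grad_lipschitz H hsmooth hc.le hbound
  set K : ℝ≥0 := max 1 (‖a ^ 2‖₊ * (L * 1)) with hK
  have hVlip : ∀ t, LipschitzWith K (V t) := by
    intro t
    have h1 : LipschitzWith 1
        (fun y : EuclideanSpace ℝ (Fin m) × EuclideanSpace ℝ (Fin m) => y.2) :=
      LipschitzWith.prod_snd
    have h2 : LipschitzWith (‖a ^ 2‖₊ * (L * 1))
        (fun y : EuclideanSpace ℝ (Fin m) × EuclideanSpace ℝ (Fin m) => Fab t y.1) :=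
      (lipschitzWith_smul (a ^ 2)).comp
        ((hGlip (a * t + b)).comp LipschitzWith.prod_fst)
    exact h1.prodMk h2
  have hVcont : Continuous
      (fun p : ℝ × (EuclideanSpace ℝ (Fin m) × EuclideanSpace ℝ (Fin m)) => V p.1 p.2) := by
    refine Continuous.prodMk continuous_snd.snd ?_
    refine Continuous.const_smul ?_ (a ^ 2)
    exact (ppw_grad_cont H hsmooth).comp
      (Continuous.prodMk ((continuous_const.mul continuous_fst).add continuous_const)
        continuous_snd.fst)
  obtain ⟨ε, hε, hloc⟩ := ppw_local V K hVcont hVlip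
  obtain ⟨X, hX0, hX⟩ := ppw_exists_global V K hVlip hε hloc t₀ (x t₀, v t₀)
  set x' : ℝ → EuclideanSpace ℝ (Fin m) := fun t => (X t).1 with hx'
  set v' : ℝ → EuclideanSpace ℝ (Fin m) := fun t => (X t).2 with hv'
  have hsol' : SolOn (fun t p => (a ^ 2) • gradient (H (a * t + b)) p) x' v' univ := by
    intro t _
    have hd := hX t
    constructor
    · exact (ContinuousLinearMap.fst ℝ (EuclideanSpace ℝ (Fin m))
        (EuclideanSpace ℝ (Fin m))).hasFDerivAt.comp_hasDerivAt t hd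
    · exact (ContinuousLinearMap.snd ℝ (EuclideanSpace ℝ (Fin m))
        (EuclideanSpace ℝ (Fin m))).hasFDerivAt.comp_hasDerivAt t hd
  have hagree : ∀ t ∈ s, x' t = x t ∧ v' t = v t := by
    intro t hts
    set Y : ℝ → EuclideanSpace ℝ (Fin m) × EuclideanSpace ℝ (Fin m) :=
      fun u => (x u, v u) with hY
    have hYd : ∀ u ∈ s, HasDerivAt Y (V u (Y u)) u :=
      fun u hu => ((hsol u hu).1.prodMk (hsol u hu).2)
    have heq0 : Y t₀ = X t₀ := hX0.symm
    have key : Y t = X t := by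
      rcases le_total t₀ t with h | h
      · have hIccs : Icc t₀ t ⊆ s := hord.out ht₀ hts
        have := ppw_agree V K hVlip (Subset.refl (Icc t₀ t)) ⟨le_rfl, h⟩
          (f := Y) (g := X)
          (fun u hu => (hYd u (hIccs hu)).hasDerivWithinAt)
          (fun u _ => (hX u).hasDerivWithinAt) heq0
        exact this ⟨h, le_rfl⟩
      · have hIccs : Icc t t₀ ⊆ s := hord.out hts ht₀
        have := ppw_agree V K hVlip (Subset.refl (Icc t t₀)) ⟨h, le_rfl⟩
          (f := Y) (g := X)
          (fun u hu => (hYd u (hIccs hu)).hasDerivWithinAt)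
          (fun u _ => (hX u).hasDerivWithinAt) heq0
        exact this ⟨le_rfl, h⟩
    constructor
    · exact (congrArg Prod.fst key).symm
    · exact (congrArg Prod.snd key).symm
  exact (hmaximal univ x' v' isOpen_univ ordConnected_univ (subset_univ s) hsol' hagree).symm

end
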